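/- arXiv:1804.08160 — 2 statements merged into one kernel-verified Lean document; each statement's English description precedes it below -/
import Mathlib

section
/- Description of the initial echelon of the formal Gabrielov echelon: let < be the lexicographic order on ℕ³ comparing the x-exponent first, then the y-exponent, then the z-exponent, and for nonzero F ∈ ℂ[[x,y,z]] let in(F) denote the <-least exponent in the support of F. Let Î = { a·1 + b·G + c·H : a, b, c ∈ ℂ[[x,y,z]], a and b depending only on x,y }. Then the set of initial exponents { in(F) : F ∈ Î, F ≠ 0 } equals S = { (i,j,0) : i,j ≥ 0 } ∪ { (i,0,k) : i ≥ k ≥ 1 } ∪ { (i,j,k) : i ≥ 0, j ≥ 1, k ≥ 1 }. -/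
/-- G = x·(e^z − 1) = x·Σ_{m≥1} z^m/m!  in ℂ[[x,y,z]]. -/
noncomputable def G : MvPowerSeries (Fin 3) ℂ :=
  fun d => if d 0 = 1 ∧ d 1 = 0 ∧ 1 ≤ d 2 then ((Nat.factorial (d 2) : ℂ))⁻¹ else 0

noncomputable def H : MvPowerSeries (Fin 3) ℂ :=
  MvPowerSeries.X 1 * MvPowerSeries.X 2 - MvPowerSeries.X 0

def DependsOnXY (F : MvPowerSeries (Fin 3) ℂ) : Prop :=
  ∀ d : Fin 3 →₀ ℕ, MvPowerSeries.coeff d F ≠ 0 → d 2 = 0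

def lexLt (d e : Fin 3 →₀ ℕ) : Prop :=
  d 0 < e 0 ∨ (d 0 = e 0 ∧ (d 1 < e 1 ∨ (d 1 = e 1 ∧ d 2 < e 2)))

def IsInit (F : MvPowerSeries (Fin 3) ℂ) (d : Fin 3 →₀ ℕ) : Prop :=
  MvPowerSeries.coeff d F ≠ 0 ∧
    ∀ d' : Fin 3 →₀ ℕ, MvPowerSeries.coeff d' F ≠ 0 → d = d' ∨ lexLt d d'

/-- The formal Gabrielov echelon Î = ℂ[[x,y]]·1 + ℂ[[x,y]]·G + ℂ[[x,y,z]]·H. -/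
def Ihat : Set (MvPowerSeries (Fin 3) ℂ) :=
  {F | ∃ a b c : MvPowerSeries (Fin 3) ℂ,
    DependsOnXY a ∧ DependsOnXY b ∧ F = a * 1 + b * G + c * H}

/-!
Modulo `H` one has `x = y z`, so `y ^ m * G` agrees with `x ^ m * G_m`, where
`G_m = x ∑_{l ≥ 1} z ^ l / (l + m)!`, up to a series in `x, y` alone. Hence `Î` contains
`x ^ (i - 1) ∑_{t < k} β_t G_t` for `k ≤ i`, whose initial exponent is `(i, 0, l)` for the least
`l ≥ 1` with `∑_t β_t / (l + t)! ≠ 0`; as the matrix `(1 / (l + t + 1)!)_{l, t < k}` is invertible,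
`β` can be chosen so that this `l` is `k`. The exponents `(i, j, 0)` and `(i, j + 1, k + 1)` are
those of `x ^ i y ^ j` and `x ^ i y ^ j z ^ k H`.

Conversely, let `F = a + b G + c H ∈ Î` have initial exponent `(i, 0, k)` with `k ≥ 1`. The
coefficient of `y ^ i z ^ (i + r)` in `F (y z, y, z)` does not see `c H`, nor `a` when `r ≥ 1`;
since `F` has no terms of `x`-degree `< i`, it equals
`F_(i,0,r) = ∑_{t < i} b_(i-1-t,t) / (r + t)!`. If `k > i` this vanishes for `r = 1, …, i`, so
invertibility of the same matrix forces all `b_(i-1-t,t) = 0`, and then `F_(i,0,k) = 0`.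
-/

open scoped Nat

section FactorialHankel

open Polynomial

variable (K : Type*) [Field K]

noncomputable def descPochhammerSequence : Polynomial.Sequence K where
  elems' i := descPochhammer K i
  degree_eq' i := by
    rw [degree_eq_natDegree (monic_descPochhammer K i).ne_zero, descPochhammer_natDegree]

noncomputable def factorialHankel (n : ℕ) : Matrix (Fin n) (Fin n) K :=
  Matrix.of fun l t => ((l + 1 + t : ℕ)! : K)⁻¹

theorem factorialHankel_mulVec_apply {n : ℕ} (β : Fin n → K) (l : Fin n) :
    (factorialHankel K n).mulVec β l = ∑ t : Fin n, ((l + 1 + t : ℕ)! : K)⁻¹ * β t :=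
  rfl

variable {K} {n : ℕ}

noncomputable def descPochhammerSum (β : Fin n → K) : K[X] :=
  ∑ t : Fin n, C (β t) * descPochhammer K (n - 1 - t)

theorem eval_descPochhammerSum [CharZero K] (β : Fin n → K) (l : Fin n) :
    (descPochhammerSum β).eval ((l + n : ℕ) : K) =
      (l + n)! * (factorialHankel K n).mulVec β l := by
  simp only [descPochhammerSum, eval_finsetSum, eval_mul, eval_C,
    descPochhammer_eval_eq_descFactorial, factorialHankel_mulVec_apply, Finset.mul_sum]
  refine Finset.sum_congr rfl fun t _ => ?_
  have hf := Nat.factorial_mul_descFactorial (n := l + n) (k := n - 1 - t) (by omega)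
  rw [show l + n - (n - 1 - t) = l + 1 + t by omega] at hf
  rw [← hf]
  push_cast
  field_simp [(l + 1 + t : ℕ).factorial_ne_zero]

theorem natDegree_descPochhammerSum_lt (hn : 0 < n) (β : Fin n → K) :
    (descPochhammerSum β).natDegree < n := by
  refine lt_of_le_of_lt (natDegree_sum_le_of_forall_le _ _ fun t _ => ?_) (Nat.sub_lt hn one_pos)
  exact (natDegree_C_mul_le _ _).trans (by rw [descPochhammer_natDegree]; omega)

theorem eq_zero_of_descPochhammerSum_eq_zero {β : Fin n → K} (h : descPochhammerSum β = 0) :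
    β = 0 := by
  have hind := (descPochhammerSequence K).linearIndependent.comp (fun t : Fin n => n - 1 - t)
    (fun a b hab => Fin.ext (by simp only at hab; omega))
  funext t
  refine Fintype.linearIndependent_iff.mp hind β ?_ t
  simpa [descPochhammerSum, smul_eq_C_mul, descPochhammerSequence] using h

variable (K n)

theorem factorialHankel_mulVec_injective [CharZero K] :
    Function.Injective (factorialHankel K n).mulVec := by
  rw [← Matrix.coe_mulVecLin, ← LinearMap.ker_eq_bot, LinearMap.ker_eq_bot']
  intro β hβ
  rcases Nat.eq_zero_or_pos n with rfl | hn
  · exact Subsingleton.elim _ _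
  refine eq_zero_of_descPochhammerSum_eq_zero <|
    eq_zero_of_natDegree_lt_card_of_eval_eq_zero _ (f := fun l : Fin n => ((l + n : ℕ) : K))
      (fun a b hab => Fin.ext ?_) (fun l => ?_)
      (by simpa using natDegree_descPochhammerSum_lt hn β)
  · have : (a : ℕ) + n = b + n := Nat.cast_injective hab
    omega
  · rw [eval_descPochhammerSum, ← Matrix.mulVecLin_apply, hβ, Pi.zero_apply, mul_zero]

theorem factorialHankel_mulVec_surjective [CharZero K] :
    Function.Surjective (factorialHankel K n).mulVec :=
  Matrix.mulVec_surjective_iff_isUnit.mpr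
    (Matrix.mulVec_injective_iff_isUnit.mp (factorialHankel_mulVec_injective K n))

end FactorialHankel

open MvPowerSeries Finset

noncomputable def xyz (n m l : ℕ) : Fin 3 →₀ ℕ := Finsupp.equivFunOnFinite.symm ![n, m, l]

section Exponents

variable {n m l n' m' l' : ℕ}

@[simp] theorem xyz_apply_zero : xyz n m l 0 = n := rfl
@[simp] theorem xyz_apply_one : xyz n m l 1 = m := rfl
@[simp] theorem xyz_apply_two : xyz n m l 2 = l := rfl

theorem xyz_eta (d : Fin 3 →₀ ℕ) : xyz (d 0) (d 1) (d 2) = d := by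
  ext a; fin_cases a <;> rfl

@[simp] theorem xyz_inj : xyz n m l = xyz n' m' l' ↔ n = n' ∧ m = m' ∧ l = l' := by
  refine ⟨fun h => ⟨congr($h 0), congr($h 1), congr($h 2)⟩, ?_⟩
  rintro ⟨rfl, rfl, rfl⟩; rfl

@[simp] theorem xyz_add : xyz n m l + xyz n' m' l' = xyz (n + n') (m + m') (l + l') := by
  ext a; fin_cases a <;> rfl

@[simp] theorem xyz_tsub : xyz n m l - xyz n' m' l' = xyz (n - n') (m - m') (l - l') := by
  ext a; fin_cases a <;> rfl

@[simp] theorem xyz_le_xyz : xyz n m l ≤ xyz n' m' l' ↔ n ≤ n' ∧ m ≤ m' ∧ l ≤ l' := by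
  simp [Finsupp.le_def, Fin.forall_fin_succ]

@[simp] theorem lexLt_xyz : lexLt (xyz n m l) (xyz n' m' l') ↔
    n < n' ∨ (n = n' ∧ (m < m' ∨ (m = m' ∧ l < l'))) := Iff.rfl

end Exponents

theorem monomial_xyz_mul_monomial_xyz (n m l n' m' l' : ℕ) (a b : ℂ) :
    (monomial (xyz n m l) a * monomial (xyz n' m' l') b : MvPowerSeries (Fin 3) ℂ) =
      monomial (xyz (n + n') (m + m') (l + l')) (a * b) := by
  rw [monomial_mul_monomial, xyz_add]

theorem H_eq : H = monomial (xyz 0 1 1) 1 - monomial (xyz 1 0 0) 1 := by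
  rw [H, X, X, X, monomial_mul_monomial, one_mul]
  congr 3 <;> ext a <;> fin_cases a <;> simp [xyz]

def xySubalgebra : Subalgebra ℂ (MvPowerSeries (Fin 3) ℂ) where
  carrier := {f | DependsOnXY f}
  mul_mem' {f g} hf hg d hd := by
    classical
    obtain ⟨p, hp, hne⟩ := exists_ne_zero_of_sum_ne_zero (by rwa [coeff_mul] at hd)
    rw [HasAntidiagonal.mem_antidiagonal] at hp
    rw [← hp, Finsupp.add_apply, hf _ (left_ne_zero_of_mul hne), hg _ (right_ne_zero_of_mul hne)]
  add_mem' {f g} hf hg d hd := by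
    rw [map_add] at hd
    by_cases h : coeff d f = 0
    · exact hg d (by simpa [h] using hd)
    · exact hf d h
  algebraMap_mem' c d hd := by
    classical
    rw [MvPowerSeries.algebraMap_apply, Algebra.algebraMap_self, RingHom.id_apply, coeff_C] at hd
    simp [show d = 0 by by_contra h; simp [h] at hd]

theorem monomial_mem_xySubalgebra {e : Fin 3 →₀ ℕ} (he : e 2 = 0) (a : ℂ) :
    monomial e a ∈ xySubalgebra := fun d hd => by
  classical
  rw [coeff_monomial] at hd
  split_ifs at hd with h
  · rwa [h]
  · exact absurd rfl hd

theorem mul_mem_Ihat {s F : MvPowerSeries (Fin 3) ℂ} (hs : s ∈ xySubalgebra) (hF : F ∈ Ihat) :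
    s * F ∈ Ihat := by
  obtain ⟨a, b, c, ha, hb, rfl⟩ := hF
  exact ⟨s * a, s * b, s * c, mul_mem hs ha, mul_mem hs hb, by ring⟩

theorem one_mem_Ihat : (1 : MvPowerSeries (Fin 3) ℂ) ∈ Ihat :=
  ⟨1, 0, 0, one_mem xySubalgebra, zero_mem xySubalgebra, by ring⟩

theorem mul_H_mem_Ihat (c : MvPowerSeries (Fin 3) ℂ) : c * H ∈ Ihat :=
  ⟨0, 0, c, zero_mem xySubalgebra, zero_mem xySubalgebra, by ring⟩

def ihatAddSubmonoid : AddSubmonoid (MvPowerSeries (Fin 3) ℂ) where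
  carrier := Ihat
  add_mem' := by
    rintro _ _ ⟨a, b, c, ha, hb, rfl⟩ ⟨a', b', c', ha', hb', rfl⟩
    exact ⟨a + a', b + b', c + c', xySubalgebra.add_mem ha ha', xySubalgebra.add_mem hb hb',
      by ring⟩
  zero_mem' := ⟨0, 0, 0, zero_mem xySubalgebra, zero_mem xySubalgebra, by ring⟩

theorem sum_mem_Ihat {ι : Type*} {s : Finset ι} {F : ι → MvPowerSeries (Fin 3) ℂ}
    (hF : ∀ i ∈ s, F i ∈ Ihat) : ∑ i ∈ s, F i ∈ Ihat :=
  AddSubmonoid.sum_mem ihatAddSubmonoid hF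

noncomputable abbrev modH :
    MvPowerSeries (Fin 3) ℂ →+* MvPowerSeries (Fin 3) ℂ ⧸ Ideal.span {H} :=
  Ideal.Quotient.mk _

theorem mem_Ihat_of_modH_eq {F a b : MvPowerSeries (Fin 3) ℂ} (ha : a ∈ xySubalgebra)
    (hb : b ∈ xySubalgebra) (h : modH F = modH (a * 1 + b * G)) : F ∈ Ihat := by
  obtain ⟨c, hc⟩ := Ideal.mem_span_singleton'.mp (Ideal.Quotient.eq.mp h)
  exact ⟨a, b, c, ha, hb, by rw [hc]; ring⟩

theorem modH_monomial_xyz_succ (n m l : ℕ) (a : ℂ) :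
    modH (monomial (xyz n (m + 1) (l + 1)) a) = modH (monomial (xyz (n + 1) m l) a) := by
  have hyz : modH (monomial (xyz 0 1 1) 1) = modH (monomial (xyz 1 0 0) 1) :=
    Ideal.Quotient.eq.mpr (by rw [← H_eq]; exact Ideal.mem_span_singleton_self _)
  have e₁ := monomial_xyz_mul_monomial_xyz n m l 0 1 1 a 1
  have e₂ := monomial_xyz_mul_monomial_xyz n m l 1 0 0 a 1
  simp only [add_zero, mul_one] at e₁ e₂
  rw [← e₁, ← e₂, map_mul, map_mul, hyz]

section InitialExponent

variable {F : MvPowerSeries (Fin 3) ℂ} {d : Fin 3 →₀ ℕ}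

theorem IsInit.ne_zero (h : IsInit F d) : F ≠ 0 := by
  rintro rfl
  exact h.1 (map_zero _)

theorem IsInit.coeff_eq_zero_of_lexLt (h : IsInit F d) {d' : Fin 3 →₀ ℕ} (hd' : lexLt d' d) :
    coeff d' F = 0 := by
  by_contra hne
  rcases h.2 d' hne with rfl | hlt <;> unfold lexLt at * <;> omega

theorem IsInit.monomial_mul (h : IsInit F d) (e : Fin 3 →₀ ℕ) :
    IsInit (monomial e 1 * F) (e + d) := by
  classical
  refine ⟨by simpa [coeff_monomial_mul] using h.1, fun d' hd' => ?_⟩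
  rw [coeff_monomial_mul] at hd'
  split_ifs at hd' with hle
  · rw [one_mul] at hd'
    rcases h.2 _ hd' with heq | hlt
    · exact Or.inl (by rw [heq, add_tsub_cancel_of_le hle])
    · right
      have := Finsupp.le_def.mp hle
      simp only [lexLt, Finsupp.add_apply, Finsupp.tsub_apply] at hlt ⊢
      have h0 := this 0; have h1 := this 1; have h2 := this 2
      omega
  · exact absurd rfl hd'

theorem isInit_one : IsInit 1 0 := by
  classical
  refine ⟨by simp [coeff_one], fun d' hd' => Or.inl ?_⟩
  rw [coeff_one] at hd'
  split_ifs at hd' with h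
  · exact h.symm
  · exact absurd rfl hd'

theorem isInit_H : IsInit H (xyz 0 1 1) := by
  classical
  refine ⟨by simp [H_eq, coeff_monomial], fun d' hd' => ?_⟩
  rw [H_eq, map_sub, coeff_monomial, coeff_monomial] at hd'
  by_cases h₁ : d' = xyz 0 1 1
  · exact Or.inl h₁.symm
  by_cases h₂ : d' = xyz 1 0 0
  · exact Or.inr (by simp [h₂])
  · simp [h₁, h₂] at hd'

end InitialExponent

/-- `x * ∑_{l ≥ 1} z ^ l / (l + t)!`. -/
noncomputable def shiftedG (t : ℕ) : MvPowerSeries (Fin 3) ℂ :=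
  fun d => if d 0 = 1 ∧ d 1 = 0 ∧ 1 ≤ d 2 then ((d 2 + t)! : ℂ)⁻¹ else 0

theorem coeff_shiftedG (t : ℕ) (d : Fin 3 →₀ ℕ) : coeff d (shiftedG t) =
    if d 0 = 1 ∧ d 1 = 0 ∧ 1 ≤ d 2 then ((d 2 + t)! : ℂ)⁻¹ else 0 :=
  rfl

theorem shiftedG_zero : shiftedG 0 = G :=
  rfl

theorem shiftedG_eq_add (t : ℕ) : shiftedG t =
    monomial (xyz 1 0 1) ((t + 1)! : ℂ)⁻¹ + monomial (xyz 0 0 1) 1 * shiftedG (t + 1) := by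
  classical
  ext d
  rw [← xyz_eta d]
  obtain _ | _ | l := d 2 <;>
    simp [coeff_shiftedG, coeff_monomial, coeff_monomial_mul, and_comm, add_comm, add_left_comm]

theorem exists_modH_monomial_mul_shiftedG (n m t : ℕ) : ∃ a ∈ xySubalgebra,
    modH (monomial (xyz n m 0) 1 * shiftedG t) =
      modH (a + monomial (xyz (n + m) 0 0) 1 * shiftedG (t + m)) := by
  induction m generalizing n t with
  | zero => exact ⟨0, zero_mem _, by simp⟩
  | succ m ih =>
    obtain ⟨a, ha, h⟩ := ih (n + 1) (t + 1)
    set c : ℂ := ((t + 1)! : ℂ)⁻¹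
    refine ⟨monomial (xyz (n + 2) m 0) c + a,
      add_mem (monomial_mem_xySubalgebra rfl c) ha, ?_⟩
    have e₁ : monomial (xyz n (m + 1) 0) 1 * monomial (xyz 1 0 1) c =
        monomial (xyz (n + 1) (m + 1) (0 + 1)) c := by
      rw [monomial_xyz_mul_monomial_xyz]; simp
    have e₂ : monomial (xyz n (m + 1) 0) 1 * monomial (xyz 0 0 1) (1 : ℂ) =
        monomial (xyz n (m + 1) (0 + 1)) 1 := by
      rw [monomial_xyz_mul_monomial_xyz]; simp
    calc modH (monomial (xyz n (m + 1) 0) 1 * shiftedG t)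
        = modH (monomial (xyz n (m + 1) (0 + 1)) 1) * modH (shiftedG (t + 1))
          + modH (monomial (xyz (n + 1) (m + 1) (0 + 1)) c) := by
          rw [shiftedG_eq_add, mul_add, ← mul_assoc, e₁, e₂, map_add, map_mul, add_comm]
      _ = modH (monomial (xyz (n + 1) m 0) 1 * shiftedG (t + 1))
          + modH (monomial (xyz (n + 2) m 0) c) := by
          rw [modH_monomial_xyz_succ, modH_monomial_xyz_succ, map_mul]
      _ = modH (monomial (xyz (n + 2) m 0) c + a
            + monomial (xyz (n + (m + 1)) 0 0) 1 * shiftedG (t + (m + 1))) := by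
          rw [h, map_add, map_add, map_add, add_right_comm n 1 m, add_right_comm t 1 m,
            ← add_assoc n m 1, ← add_assoc t m 1]
          abel

theorem monomial_mul_shiftedG_mem_Ihat {n t : ℕ} (h : t ≤ n) (c : ℂ) :
    monomial (xyz n 0 0) c * shiftedG t ∈ Ihat := by
  obtain ⟨a, ha, hred⟩ := exists_modH_monomial_mul_shiftedG 0 t 0
  simp only [zero_add, shiftedG_zero] at hred
  have hmem : monomial (xyz t 0 0) 1 * shiftedG t ∈ Ihat :=
    mem_Ihat_of_modH_eq (neg_mem ha) (monomial_mem_xySubalgebra (e := xyz 0 t 0) rfl 1) (by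
      rw [mul_one, map_add, map_neg, hred, map_add]
      ring)
  have := mul_mem_Ihat (monomial_mem_xySubalgebra (e := xyz (n - t) 0 0) rfl c) hmem
  rwa [← mul_assoc, monomial_xyz_mul_monomial_xyz, Nat.sub_add_cancel h, mul_one] at this

theorem isInit_sum_smul_shiftedG {k : ℕ} (hk : 0 < k) {β : Fin k → ℂ}
    (hβ : (factorialHankel ℂ k).mulVec β = Pi.single ⟨k - 1, by omega⟩ 1) :
    IsInit (∑ t, β t • shiftedG t) (xyz 1 0 k) := by
  have hcoeff : ∀ d, coeff d (∑ t, β t • shiftedG t) =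
      if d 0 = 1 ∧ d 1 = 0 ∧ 1 ≤ d 2 then ∑ t : Fin k, ((d 2 + t)! : ℂ)⁻¹ * β t else 0 := by
    intro d
    simp only [map_sum, coeff_smul, coeff_shiftedG]
    split_ifs <;> simp [*, mul_comm]
  have hrow : ∀ l : Fin k, ∑ t : Fin k, ((l + 1 + t : ℕ)! : ℂ)⁻¹ * β t =
      if (l : ℕ) = k - 1 then 1 else 0 := fun l => by
    simpa [factorialHankel_mulVec_apply, Pi.single_apply, Fin.ext_iff] using congrFun hβ l
  refine ⟨?_, fun d' hd' => ?_⟩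
  · have := hrow ⟨k - 1, by omega⟩
    simp only [Nat.sub_add_cancel hk, if_true] at this
    simp [hcoeff, this, hk.ne']
  · rw [hcoeff] at hd'
    split_ifs at hd' with hc
    · have hkd : k ≤ d' 2 := by
        by_contra! hlt
        have := hrow ⟨d' 2 - 1, by omega⟩
        simp only [Nat.sub_add_cancel hc.2.2] at this
        exact hd' (by rw [this, if_neg (by omega)])
      rw [← xyz_eta d', hc.1, hc.2.1]
      rcases hkd.eq_or_lt with heq | hlt
      · exact Or.inl (by rw [heq])
      · exact Or.inr (by simp [hlt])
    · exact absurd rfl hd'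

theorem exists_mem_Ihat_isInit_xyz_zero {i k : ℕ} (hk : 1 ≤ k) (hki : k ≤ i) :
    ∃ F ∈ Ihat, IsInit F (xyz i 0 k) := by
  obtain ⟨β, hβ⟩ := factorialHankel_mulVec_surjective ℂ k (Pi.single ⟨k - 1, by omega⟩ 1)
  refine ⟨monomial (xyz (i - 1) 0 0) 1 * ∑ t, β t • shiftedG t, ?_, ?_⟩
  · rw [Finset.mul_sum]
    refine sum_mem_Ihat fun t _ => ?_
    rw [mul_smul_comm, ← smul_mul_assoc, ← map_smul, smul_eq_mul, mul_one]
    exact monomial_mul_shiftedG_mem_Ihat (by omega) _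
  · have := (isInit_sum_smul_shiftedG hk hβ).monomial_mul (xyz (i - 1) 0 0)
    rwa [xyz_add, Nat.sub_add_cancel (by omega), add_zero, zero_add] at this

theorem coeff_G (d : Fin 3 →₀ ℕ) :
    coeff d G = if d 0 = 1 ∧ d 1 = 0 ∧ 1 ≤ d 2 then ((d 2)! : ℂ)⁻¹ else 0 :=
  rfl

theorem coeff_mul_G {b : MvPowerSeries (Fin 3) ℂ} (hb : b ∈ xySubalgebra) (n m l : ℕ) :
    coeff (xyz n m l) (b * G) =
      if 1 ≤ n ∧ 1 ≤ l then coeff (xyz (n - 1) m 0) b * ((l)! : ℂ)⁻¹ else 0 := by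
  classical
  have hsupp : ∀ pq ∈ antidiagonal (xyz n m l), coeff pq.1 b * coeff pq.2 G ≠ 0 →
      (1 ≤ n ∧ 1 ≤ l) ∧ pq = (xyz (n - 1) m 0, xyz 1 0 l) := by
    rintro ⟨p, q⟩ hpq hne
    dsimp only at hne ⊢
    rw [HasAntidiagonal.mem_antidiagonal] at hpq
    have hp := hb p (left_ne_zero_of_mul hne)
    have hq := right_ne_zero_of_mul hne
    rw [coeff_G] at hq
    split_ifs at hq with hc
    · have h0 := congr($hpq 0)
      have h1 := congr($hpq 1)
      have h2 := congr($hpq 2)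
      simp only [Finsupp.add_apply, xyz_apply_zero, xyz_apply_one, xyz_apply_two] at h0 h1 h2
      refine ⟨by omega, ?_⟩
      rw [← xyz_eta p, ← xyz_eta q, Prod.mk.injEq, xyz_inj, xyz_inj]
      omega
    · exact absurd rfl hq
  rw [coeff_mul]
  split_ifs with h
  · rw [sum_eq_single_of_mem (xyz (n - 1) m 0, xyz 1 0 l)]
    · simp [coeff_G, h.2]
    · rw [HasAntidiagonal.mem_antidiagonal, xyz_add, xyz_inj]
      omega
    · exact fun pq hpq hne => by_contra fun hc => hne (hsupp pq hpq hc).2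
  · exact sum_eq_zero fun pq hpq => by_contra fun hc => h (hsupp pq hpq hc).1

/-- The coefficient of `y ^ p * z ^ (p + r)` in `F (y z, y, z)`; it vanishes on multiples of
`H = y z - x`. -/
noncomputable def diagSum (p r : ℕ) (F : MvPowerSeries (Fin 3) ℂ) : ℂ :=
  ∑ x ∈ antidiagonal p, coeff (xyz x.1 x.2 (r + x.2)) F

section DiagSum

variable {p r : ℕ}

theorem diagSum_add (F F' : MvPowerSeries (Fin 3) ℂ) :
    diagSum p r (F + F') = diagSum p r F + diagSum p r F' := by
  simp [diagSum, sum_add_distrib]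

theorem diagSum_mul_H (c : MvPowerSeries (Fin 3) ℂ) : diagSum p r (c * H) = 0 := by
  classical
  rw [diagSum, H_eq]
  cases p with
  | zero => simp [mul_sub, coeff_mul_monomial]
  | succ q =>
    simp only [mul_sub, map_sub, sum_sub_distrib]
    rw [sub_eq_zero, Nat.sum_antidiagonal_succ', Nat.sum_antidiagonal_succ]
    simp [coeff_mul_monomial, ← add_assoc]

theorem diagSum_eq_zero_of_mem {a : MvPowerSeries (Fin 3) ℂ} (ha : a ∈ xySubalgebra)
    (hr : 1 ≤ r) : diagSum p r a = 0 :=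
  sum_eq_zero fun x _ => by_contra fun h => by have := ha _ h; simp at this; omega

theorem diagSum_mul_G {b : MvPowerSeries (Fin 3) ℂ} (hb : b ∈ xySubalgebra) (hr : 1 ≤ r) :
    diagSum p r (b * G) = ∑ t : Fin p, ((r + t)! : ℂ)⁻¹ * coeff (xyz (p - 1 - t) t 0) b := by
  cases p with
  | zero => simp [diagSum, coeff_mul_G hb]
  | succ q =>
    have reindex : ∀ f : ℕ → ℕ → ℂ,
        ∑ x ∈ antidiagonal q, f x.1 x.2 = ∑ t : Fin (q + 1), f (q - t) t := fun f => by
        rw [← Nat.sum_antidiagonal_swap]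
        exact (Nat.sum_antidiagonal_eq_sum_range_succ (fun a b => f b a) q).trans
          (Fin.sum_univ_eq_sum_range (fun t => f (q - t) t) (q + 1)).symm
    rw [diagSum, Nat.sum_antidiagonal_succ,
      reindex fun n m => coeff (xyz (n + 1) m (r + m)) (b * G)]
    simp [coeff_mul_G hb, mul_comm, fun t => hr.trans (Nat.le_add_right r t)]

theorem diagSum_eq_coeff {F : MvPowerSeries (Fin 3) ℂ}
    (h : ∀ n m l, n < p → coeff (xyz n m l) F = 0) : diagSum p r F = coeff (xyz p 0 r) F := by
  rw [diagSum, sum_eq_single_of_mem (p, 0) (by simp)]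
  · simp
  · rintro ⟨n, m⟩ hx hne
    rw [HasAntidiagonal.mem_antidiagonal] at hx
    simp only [ne_eq, Prod.mk.injEq] at hne
    exact h _ _ _ (by omega)

end DiagSum

theorem le_of_isInit_xyz_zero {F : MvPowerSeries (Fin 3) ℂ} (hF : F ∈ Ihat) {i k : ℕ}
    (hk : 1 ≤ k) (h : IsInit F (xyz i 0 k)) : k ≤ i := by
  obtain ⟨a, b, c, ha, hb, rfl⟩ := hF
  by_contra! hik
  have hcoeff : ∀ r, 1 ≤ r → coeff (xyz i 0 r) (a * 1 + b * G + c * H) =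
      ∑ t : Fin i, ((r + t)! : ℂ)⁻¹ * coeff (xyz (i - 1 - t) t 0) b := by
    intro r hr
    rw [← diagSum_eq_coeff fun n m l hn => h.coeff_eq_zero_of_lexLt (by simp [hn]), diagSum_add,
      diagSum_add, mul_one, diagSum_eq_zero_of_mem ha hr, diagSum_mul_H, diagSum_mul_G hb hr,
      zero_add, add_zero]
  have hβ : (fun t : Fin i => coeff (xyz (i - 1 - t) t 0) b) = 0 := by
    refine factorialHankel_mulVec_injective ℂ i ?_
    rw [Matrix.mulVec_zero]
    funext l
    have := hcoeff (l + 1) (by omega)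
    rw [h.coeff_eq_zero_of_lexLt (by simp; omega)] at this
    rw [factorialHankel_mulVec_apply, Pi.zero_apply, this]
  exact h.1 (by rw [hcoeff k hk]; simp [fun t => congrFun hβ t])

theorem gabrielov_initial_echelon :
    {d : Fin 3 →₀ ℕ | ∃ F ∈ Ihat, F ≠ 0 ∧ IsInit F d} =
    {d : Fin 3 →₀ ℕ | d 2 = 0 ∨
      (d 1 = 0 ∧ 1 ≤ d 2 ∧ d 2 ≤ d 0) ∨
      (1 ≤ d 1 ∧ 1 ≤ d 2)} := by
  ext d
  constructor
  · rintro ⟨F, hF, -, hinit⟩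
    by_cases h2 : d 2 = 0
    · exact Or.inl h2
    by_cases h1 : d 1 = 0
    · rw [← xyz_eta d, h1] at hinit
      exact Or.inr (Or.inl ⟨h1, by omega, le_of_isInit_xyz_zero hF (by omega) hinit⟩)
    · exact Or.inr (Or.inr ⟨by omega, by omega⟩)
  · intro hd
    suffices ∃ F ∈ Ihat, IsInit F d by
      obtain ⟨F, hF, hinit⟩ := this
      exact ⟨F, hF, hinit.ne_zero, hinit⟩
    rcases hd with h2 | ⟨h1, hk, hki⟩ | ⟨h1, h2⟩
    · have := isInit_one.monomial_mul d
      rw [add_zero] at this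
      exact ⟨_, mul_mem_Ihat (monomial_mem_xySubalgebra h2 1) one_mem_Ihat, this⟩
    · rw [← xyz_eta d, h1]
      exact exists_mem_Ihat_isInit_xyz_zero hk hki
    · have := isInit_H.monomial_mul (xyz (d 0) (d 1 - 1) (d 2 - 1))
      rw [xyz_add, add_zero, Nat.sub_add_cancel h1, Nat.sub_add_cancel h2, xyz_eta] at this
      exact ⟨_, mul_H_mem_Ihat _, this⟩
end

section
/- Closed form and boundedness of the normalized coefficients: for all integers i ≥ k ≥ 1, q_{i,k}/q_{k,k} = ((2k−1)!·(i−1)!) / ((k−1)!·(i−k)!·(i+k−1)!), and q_{i,k} ≤ q_{k,k}. -/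
/- STATEMENT 11: Closed form and boundedness of the normalized coefficients:
   for i ≥ k ≥ 1, q_{i,k}/q_{k,k} = ((2k−1)!·(i−1)!)/((k−1)!·(i−k)!·(i+k−1)!)
   and q_{i,k} ≤ q_{k,k}. -/

/-- The rising factorial (1/2)^{\overline{k−1}} = (1/2)(1/2+1)⋯(1/2+k−2). -/
def rise (k : ℕ) : ℚ := ∏ j ∈ Finset.range (k - 1), ((1 : ℚ) / 2 + j)

/-- q_{i,k} = (i−1)! / (4^{k−1}·(i−k)!·(i+k−1)!·(1/2)^{\overline{k−1}}). -/
def q (i k : ℕ) : ℚ :=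
  (Nat.factorial (i - 1) : ℚ) /
    (4 ^ (k - 1) * (Nat.factorial (i - k) : ℚ) * (Nat.factorial (i + k - 1) : ℚ) * rise k)

lemma rise_pos (k : ℕ) : 0 < rise k := by
  apply Finset.prod_pos
  intro j _
  positivity

lemma key_nat (i k : ℕ) (hk : 1 ≤ k) (hik : k ≤ i) :
    Nat.factorial (2 * k - 1) * Nat.factorial (i - 1) ≤
      Nat.factorial (k - 1) * Nat.factorial (i - k) * Nat.factorial (i + k - 1) := by
  have h1 : i - k ≤ i - 1 := by omega
  have h2 : i - k ≤ i + k - 1 := by omega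
  have e1 := Nat.choose_mul_factorial_mul_factorial h1
  have e2 := Nat.choose_mul_factorial_mul_factorial h2
  have r1 : i - 1 - (i - k) = k - 1 := by omega
  have r2 : i + k - 1 - (i - k) = 2 * k - 1 := by omega
  rw [r1] at e1
  rw [r2] at e2
  have hc : (i - 1).choose (i - k) ≤ (i + k - 1).choose (i - k) :=
    Nat.choose_le_choose _ (by omega)
  have step : Nat.factorial (2 * k - 1) * Nat.factorial (i - 1) ≤
      Nat.factorial (k - 1) * Nat.factorial (i + k - 1) := by
    calc Nat.factorial (2 * k - 1) * Nat.factorial (i - 1)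
        = Nat.factorial (2 * k - 1) *
            ((i - 1).choose (i - k) * (i - k).factorial * (k - 1).factorial) := by rw [e1]
      _ ≤ Nat.factorial (2 * k - 1) *
            ((i + k - 1).choose (i - k) * (i - k).factorial * (k - 1).factorial) := by
          gcongr
      _ = Nat.factorial (k - 1) *
            ((i + k - 1).choose (i - k) * (i - k).factorial * (2 * k - 1).factorial) := by
          ring
      _ = Nat.factorial (k - 1) * Nat.factorial (i + k - 1) := by rw [e2]
  calc Nat.factorial (2 * k - 1) * Nat.factorial (i - 1)
      ≤ Nat.factorial (k - 1) * Nat.factorial (i + k - 1) := step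
    _ ≤ Nat.factorial (k - 1) * Nat.factorial (i - k) * Nat.factorial (i + k - 1) := by
        have h : 1 ≤ (i - k).factorial := Nat.one_le_iff_ne_zero.mpr (Nat.factorial_ne_zero _)
        calc Nat.factorial (k - 1) * Nat.factorial (i + k - 1)
            = Nat.factorial (k - 1) * 1 * Nat.factorial (i + k - 1) := by ring
          _ ≤ Nat.factorial (k - 1) * Nat.factorial (i - k) * Nat.factorial (i + k - 1) := by
              gcongr

theorem q_normalized_closed_form_and_bounded (i k : ℕ) (hk : 1 ≤ k) (hik : k ≤ i) :
    q i k / q k k =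
      ((Nat.factorial (2 * k - 1) : ℚ) * (Nat.factorial (i - 1) : ℚ)) /
        ((Nat.factorial (k - 1) : ℚ) * (Nat.factorial (i - k) : ℚ) *
          (Nat.factorial (i + k - 1) : ℚ)) ∧
    q i k ≤ q k k := by
  have hkk : k - k = 0 := Nat.sub_self k
  have hkk2 : k + k - 1 = 2 * k - 1 := by omega
  have hr : (0 : ℚ) < rise k := rise_pos k
  have h4 : (0 : ℚ) < 4 ^ (k - 1) := by positivity
  have f1 : (0 : ℚ) < (Nat.factorial (i - 1) : ℚ) := by exact_mod_cast Nat.factorial_pos _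
  have f2 : (0 : ℚ) < (Nat.factorial (i - k) : ℚ) := by exact_mod_cast Nat.factorial_pos _
  have f3 : (0 : ℚ) < (Nat.factorial (i + k - 1) : ℚ) := by exact_mod_cast Nat.factorial_pos _
  have f4 : (0 : ℚ) < (Nat.factorial (k - 1) : ℚ) := by exact_mod_cast Nat.factorial_pos _
  have f5 : (0 : ℚ) < (Nat.factorial (2 * k - 1) : ℚ) := by exact_mod_cast Nat.factorial_pos _
  have key : ((Nat.factorial (2 * k - 1) : ℚ) * (Nat.factorial (i - 1) : ℚ)) ≤
      (Nat.factorial (k - 1) : ℚ) * (Nat.factorial (i - k) : ℚ) *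
        (Nat.factorial (i + k - 1) : ℚ) := by
    exact_mod_cast key_nat i k hk hik
  constructor
  · simp only [q, hkk, hkk2, Nat.factorial_zero, Nat.cast_one]
    field_simp
  · simp only [q, hkk, hkk2, Nat.factorial_zero, Nat.cast_one]
    rw [div_le_div_iff₀ (by positivity) (by positivity)]
    have hP : (0 : ℚ) < 4 ^ (k - 1) * rise k := by positivity
    nlinarith [mul_le_mul_of_nonneg_left key hP.le]
end
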